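/- arXiv:2601.20778 — 4 statements merged into one kernel-verified Lean document; each statement's English description precedes it below -/
import Mathlib

section
/- For the T_{333} singularity g = x1^2 + x2^3 + x3^3 + x4^3 + a·x2 x3 x4 with a^3 + 27 ≠ 0, the Tjurina algebra C[[x1,...,x4]]/(g, ∂g/∂x1,...,∂g/∂x4) has dimension 8 over C. -/
open MvPolynomial

/-- The equation of the `T_{333}` singularity with parameter `a`:
`x1^2 + x2^3 + x3^3 + x4^3 + a*x2*x3*x4`. -/
noncomputable def gT333 (a : ℂ) : MvPolynomial (Fin 4) ℂ :=
  X 0 ^ 2 + X 1 ^ 3 + X 2 ^ 3 + X 3 ^ 3 + C a * (X 1 * X 2 * X 3)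

/-- The Tjurina ideal of `gT333 a`. -/
noncomputable def tjurinaT333 (a : ℂ) : Ideal (MvPolynomial (Fin 4) ℂ) :=
  Ideal.span {gT333 a, pderiv 0 (gT333 a), pderiv 1 (gT333 a),
    pderiv 2 (gT333 a), pderiv 3 (gT333 a)}

/-!
Let `y₁, y₂, y₃` be the classes of `X 1, X 2, X 3` in the Tjurina algebra and `c = -a/3`. The
class of `X 0` vanishes and `y_j² = c y_{j+1} y_{j+2}` (indices mod 3), so
`y_j² y_{j+1} = c y_{j+1}² y_{j+2} = c² y_{j+2}² y_j = c³ y_j² y_{j+1}`. Since `c³ ≠ 1` exactly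
when `a³ ≠ -27`, every `y_j² y_k` with `j ≠ k` vanishes, and the eight squarefree monomials
`y^S`, `S ⊆ {1, 2, 3}`, span. They are independent because the linear form "coefficient of
`y₁y₂y₃`" (which sends `X_j³` to `c`) kills the Tjurina ideal and pairs `y^S` with `y^T` to `1`
if `T` is the complement of `S` and to `0` otherwise.
-/

theorem Algebra.span_eq_top_of_mul_mem {R A : Type*} [CommSemiring R] [Semiring A] [Algebra R A]
    {s t : Set A} (hs : Algebra.adjoin R s = ⊤)
    (hst : ∀ x ∈ s, ∀ m ∈ t, x * m ∈ Submodule.span R t) (h1 : 1 ∈ Submodule.span R t) :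
    Submodule.span R t = ⊤ := by
  set M := Submodule.span R t
  have hmul : ∀ x, ∀ m ∈ M, x * m ∈ M := by
    intro x
    have hx : x ∈ Algebra.adjoin R s := hs ▸ Algebra.mem_top
    induction hx using Algebra.adjoin_induction with
    | mem x hx =>
      have hle := (Submodule.span_le (p := M.comap (LinearMap.mulLeft R x))).2 (hst x hx)
      exact fun m hm => hle hm
    | algebraMap r =>
      intro m hm
      simpa [Algebra.algebraMap_eq_smul_one] using M.smul_mem r hm
    | add x y _ _ hx hy => intro m hm; rw [add_mul]; exact M.add_mem (hx m hm) (hy m hm)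
    | mul x y _ _ hx hy => intro m hm; rw [mul_assoc]; exact hx _ (hy m hm)
  exact Submodule.eq_top_iff'.2 fun x => by simpa using hmul x 1 h1

theorem MvPolynomial.adjoin_range_mk_X_eq_top {σ R : Type*} [CommRing R]
    (I : Ideal (MvPolynomial σ R)) :
    Algebra.adjoin R (Set.range fun i => Ideal.Quotient.mk I (X i)) = ⊤ := by
  rw [show (Set.range fun i => Ideal.Quotient.mk I (X i)) =
      Ideal.Quotient.mkₐ R I '' Set.range X by rw [← Set.range_comp]; rfl,
    Algebra.adjoin_image, adjoin_range_X, Algebra.map_top, AlgHom.range_eq_top]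
  exact Ideal.Quotient.mkₐ_surjective R I

theorem Ideal.linearIndependent_mk_of_pairing {K R ι : Type*} [CommRing K] [CommRing R]
    [Algebra K R] {I : Ideal R} (φ : R →ₗ[K] K) (hφ : ∀ p ∈ I, φ p = 0) (b b' : ι → R)
    (h0 : Pairwise fun t s => φ (b' t * b s) = 0) (h1 : ∀ t, φ (b' t * b t) = 1) :
    LinearIndependent K (fun s => Ideal.Quotient.mk I (b s)) :=
  LinearIndependent.of_pairwise_dual_eq_zero_one _
    (fun t => (I.restrictScalars K).liftQ (φ ∘ₗ LinearMap.mulLeft K (b' t))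
      (fun _ hp => hφ _ (I.mul_mem_left _ hp)) ∘ₗ
      (Submodule.Quotient.restrictScalarsEquiv K I).symm.toLinearMap) h0 h1

theorem MvPolynomial.map_eq_zero_of_mem_span {σ K : Type*} [CommRing K]
    (φ : MvPolynomial σ K →ₗ[K] K) {s : Set (MvPolynomial σ K)}
    (hs : ∀ g ∈ s, ∀ u, φ (monomial u 1 * g) = 0) : ∀ p ∈ Ideal.span s, φ p = 0 := by
  suffices h : ∀ p ∈ Ideal.span s, ∀ r, φ (r * p) = 0 from fun p hp => by simpa using h p hp 1
  intro p hp
  induction hp using Submodule.span_induction with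
  | mem g hg =>
    intro r
    induction r using MvPolynomial.induction_on' with
    | monomial u c =>
      rw [show monomial u c = c • monomial u (1 : K) by
          rw [smul_monomial, smul_eq_mul, mul_one], smul_mul_assoc, map_smul, hs g hg, smul_zero]
    | add p q hp hq => rw [add_mul, map_add, hp, hq, add_zero]
  | zero => simp
  | add x y _ _ hx hy => intro r; rw [mul_add, map_add, hx, hy, add_zero]
  | smul q x _ hx => intro r; rw [smul_eq_mul, ← mul_assoc]; exact hx (r * q)

theorem sq_mul_eq_zero_of_sq_eq_mul {A : Type*} [CommRing A] {c x y z : A}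
    (hx : x ^ 2 = c * (y * z)) (hy : y ^ 2 = c * (z * x)) (hz : z ^ 2 = c * (x * y)) :
    (1 - c ^ 3) * (x ^ 2 * y) = 0 ∧ (1 - c ^ 3) * (x ^ 2 * z) = 0 :=
  ⟨by linear_combination y * hx + c * z * hy + c ^ 2 * x * hz,
   by linear_combination z * hx + c * y * hz + c ^ 2 * x * hy⟩

namespace TjurinaT333

theorem pderiv_gT333_zero (a : ℂ) : pderiv 0 (gT333 a) = 2 * X 0 := by
  simp [gT333, pderiv_X]

theorem pderiv_gT333_succ (a : ℂ) (j : Fin 3) :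
    pderiv j.succ (gT333 a) = 3 * X j.succ ^ 2 + C a * (X (j + 1).succ * X (j + 2).succ) := by
  fin_cases j <;>
    simp only [gT333, map_add, Derivation.leibniz, Derivation.leibniz_pow, derivation_C, pderiv_X,
      Pi.single_apply, Fin.reduceFinMk, Fin.reduceSucc, Fin.reduceAdd, Fin.reduceEq, Fin.isValue,
      ↓reduceIte, smul_eq_mul, nsmul_eq_mul] <;>
    ring

theorem pderiv_gT333_mem (a : ℂ) (i : Fin 4) : pderiv i (gT333 a) ∈ tjurinaT333 a :=
  Ideal.subset_span (by fin_cases i <;> simp)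

theorem X_zero_mem (a : ℂ) : X 0 ∈ tjurinaT333 a := by
  have h := (tjurinaT333 a).mul_mem_left (C 2⁻¹) (pderiv_gT333_mem a 0)
  rwa [pderiv_gT333_zero, ← mul_assoc, ← map_ofNat C 2, ← C_mul, inv_mul_cancel₀ two_ne_zero,
    C_1, one_mul] at h

theorem X_succ_sq_sub_mem (a : ℂ) (j : Fin 3) :
    X j.succ ^ 2 - C (-(a / 3)) * (X (j + 1).succ * X (j + 2).succ) ∈ tjurinaT333 a := by
  have h3 : C (3⁻¹ : ℂ) * 3 = (1 : MvPolynomial (Fin 4) ℂ) := by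
    rw [← map_ofNat C 3, ← C_mul, inv_mul_cancel₀ three_ne_zero, C_1]
  have hc : C (-(a / 3)) = -(C 3⁻¹ * C a : MvPolynomial (Fin 4) ℂ) := by
    rw [← C_mul, ← C_neg]
    ring_nf
  convert (tjurinaT333 a).mul_mem_left (C 3⁻¹) (pderiv_gT333_mem a j.succ) using 1
  rw [pderiv_gT333_succ]
  linear_combination -(X j.succ ^ 2) * h3 - (X (j + 1).succ * X (j + 2).succ) * hc

/-- The coefficient of `X 1 * X 2 * X 3` in the normal form of `X 1 ^ i * X 2 ^ j * X 3 ^ k`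
modulo the Tjurina ideal, with `c = -a/3`. -/
noncomputable def socleWeight (c : ℂ) : ℕ → ℕ → ℕ → ℂ
  | 1, 1, 1 => 1
  | 3, 0, 0 | 0, 3, 0 | 0, 0, 3 => c
  | _, _, _ => 0

theorem socleWeight_of_le_two (c : ℂ) {i j k : ℕ} (hi : i ≤ 2) (hj : j ≤ 2) (hk : k ≤ 2) :
    socleWeight c i j k = if i = 1 ∧ j = 1 ∧ k = 1 then 1 else 0 := by
  interval_cases i <;> interval_cases j <;> interval_cases k <;> rfl

theorem socleWeight_gT333_relation {a c : ℂ} (h : a = -(3 * c)) (i j k : ℕ) :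
    socleWeight c (i + 3) j k + socleWeight c i (j + 3) k + socleWeight c i j (k + 3)
      + a * socleWeight c (i + 1) (j + 1) (k + 1) = 0 := by
  rcases i with _ | i <;> rcases j with _ | j <;> rcases k with _ | k
  · change c + c + c + a * 1 = 0
    linear_combination h
  all_goals simp [socleWeight]

theorem socleWeight_pderiv_relation {a c : ℂ} (h : a = -(3 * c)) (i j k : ℕ) :
    3 * socleWeight c (i + 2) j k + a * socleWeight c i (j + 1) (k + 1) = 0 ∧
    3 * socleWeight c i (j + 2) k + a * socleWeight c (i + 1) j (k + 1) = 0 ∧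
    3 * socleWeight c i j (k + 2) + a * socleWeight c (i + 1) (j + 1) k = 0 := by
  rcases i with _ | _ | i <;> rcases j with _ | _ | j <;> rcases k with _ | _ | k <;>
    simp [socleWeight, h]

noncomputable def socleFunctional (c : ℂ) : MvPolynomial (Fin 4) ℂ →ₗ[ℂ] ℂ :=
  (basisMonomials (Fin 4) ℂ).constr ℂ fun u =>
    if u 0 = 0 then socleWeight c (u 1) (u 2) (u 3) else 0

theorem socleFunctional_monomial (c : ℂ) (u : Fin 4 →₀ ℕ) (r : ℂ) :
    socleFunctional c (monomial u r) =
      r * if u 0 = 0 then socleWeight c (u 1) (u 2) (u 3) else 0 := by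
  rw [show monomial u r = r • monomial u (1 : ℂ) by rw [smul_monomial, smul_eq_mul, mul_one],
    map_smul, smul_eq_mul]
  congr 1
  exact (basisMonomials (Fin 4) ℂ).constr_basis ℂ _ u

theorem socleFunctional_monomial_mul_gT333 (a : ℂ) (u : Fin 4 →₀ ℕ) :
    socleFunctional (-(a / 3)) (monomial u 1 * gT333 a) = 0 := by
  by_cases hu : u 0 = 0
  · simpa [gT333, X, monomial_pow, C_mul_monomial, monomial_mul, mul_add, map_add,
      socleFunctional_monomial, hu]
      using socleWeight_gT333_relation (a := a) (c := -(a / 3)) (by ring) (u 1) (u 2) (u 3)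
  · simp [gT333, X, monomial_pow, C_mul_monomial, monomial_mul, mul_add, map_add,
      socleFunctional_monomial, hu]

theorem socleFunctional_monomial_mul_pderiv (a : ℂ) (u : Fin 4 →₀ ℕ) (i : Fin 4) :
    socleFunctional (-(a / 3)) (monomial u 1 * pderiv i (gT333 a)) = 0 := by
  cases i using Fin.cases with
  | zero =>
    simp [pderiv_gT333_zero, X, ← map_ofNat C, C_mul_monomial, monomial_mul,
      socleFunctional_monomial]
  | succ j =>
    rw [pderiv_gT333_succ, ← map_ofNat C 3]
    by_cases hu : u 0 = 0
    · obtain ⟨h1, h2, h3⟩ := socleWeight_pderiv_relation (a := a) (c := -(a / 3)) (by ring)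
        (u 1) (u 2) (u 3)
      fin_cases j
      · simpa [X, monomial_pow, C_mul_monomial, monomial_mul, mul_add, map_add,
          socleFunctional_monomial, hu] using h1
      · simpa [X, monomial_pow, C_mul_monomial, monomial_mul, mul_add, map_add,
          socleFunctional_monomial, hu] using h2
      · simpa [X, monomial_pow, C_mul_monomial, monomial_mul, mul_add, map_add,
          socleFunctional_monomial, hu] using h3
    · simp [X, monomial_pow, C_mul_monomial, monomial_mul, mul_add, map_add,
        socleFunctional_monomial, hu]

theorem socleFunctional_eq_zero_of_mem (a : ℂ) :
    ∀ p ∈ tjurinaT333 a, socleFunctional (-(a / 3)) p = 0 := by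
  refine MvPolynomial.map_eq_zero_of_mem_span _ fun g hg u => ?_
  rcases hg with rfl | hg
  · exact socleFunctional_monomial_mul_gT333 a u
  · obtain ⟨i, rfl⟩ : ∃ i, g = pderiv i (gT333 a) := by
      simp only [Set.mem_insert_iff, Set.mem_singleton_iff] at hg
      rcases hg with rfl | rfl | rfl | rfl <;> exact ⟨_, rfl⟩
    exact socleFunctional_monomial_mul_pderiv a u i

noncomputable def squarefreeMonomial (S : Finset (Fin 3)) : MvPolynomial (Fin 4) ℂ :=
  ∏ j ∈ S, X j.succ

theorem squarefreeMonomial_insert {j : Fin 3} {S : Finset (Fin 3)} (hj : j ∉ S) :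
    squarefreeMonomial (insert j S) = X j.succ * squarefreeMonomial S :=
  Finset.prod_insert hj

theorem squarefreeMonomial_eq_mul_erase {j : Fin 3} {S : Finset (Fin 3)} (hj : j ∈ S) :
    squarefreeMonomial S = X j.succ * squarefreeMonomial (S.erase j) :=
  (Finset.mul_prod_erase S _ hj).symm

theorem squarefreeMonomial_eq_monomial (S : Finset (Fin 3)) :
    squarefreeMonomial S = monomial (∑ j ∈ S, Finsupp.single j.succ 1) 1 :=
  (monomial_sum_one S _).symm

theorem sum_single_succ_apply_zero (S : Finset (Fin 3)) :
    (∑ j ∈ S, Finsupp.single j.succ 1 : Fin 4 →₀ ℕ) 0 = 0 := by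
  simp [Finsupp.finsetSum_apply]

theorem sum_single_succ_apply_succ (S : Finset (Fin 3)) (k : Fin 3) :
    (∑ j ∈ S, Finsupp.single j.succ 1 : Fin 4 →₀ ℕ) k.succ = if k ∈ S then 1 else 0 := by
  simp [Finsupp.finsetSum_apply, Finsupp.single_apply]

theorem socleFunctional_squarefreeMonomial_compl_mul (c : ℂ) (S T : Finset (Fin 3)) :
    socleFunctional c (squarefreeMonomial Tᶜ * squarefreeMonomial S) =
      if S = T then 1 else 0 := by
  have hmem (k : Fin 3) : ((if k ∈ Tᶜ then 1 else 0) + if k ∈ S then 1 else 0) = 1 ↔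
      (k ∈ S ↔ k ∈ T) := by
    by_cases hS : k ∈ S <;> by_cases hT : k ∈ T <;> simp [hS, hT]
  rw [squarefreeMonomial_eq_monomial, squarefreeMonomial_eq_monomial, monomial_mul,
    socleFunctional_monomial, one_mul, Finsupp.add_apply, sum_single_succ_apply_zero,
    sum_single_succ_apply_zero, if_pos rfl,
    show (1 : Fin 4) = (0 : Fin 3).succ from rfl, show (2 : Fin 4) = (1 : Fin 3).succ from rfl,
    show (3 : Fin 4) = (2 : Fin 3).succ from rfl]
  simp only [Finsupp.add_apply]
  rw [sum_single_succ_apply_succ, sum_single_succ_apply_succ, sum_single_succ_apply_succ,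
    sum_single_succ_apply_succ, sum_single_succ_apply_succ, sum_single_succ_apply_succ,
    socleWeight_of_le_two]
  · rw [one_mul]
    simp only [hmem, Finset.ext_iff]
    congr 1
    exact propext ⟨fun h k => by fin_cases k <;> simp [h], fun h => ⟨h 0, h 1, h 2⟩⟩
  all_goals split_ifs <;> omega

theorem linearIndependent_mk_squarefreeMonomial (a : ℂ) :
    LinearIndependent ℂ fun S : Finset (Fin 3) =>
      Ideal.Quotient.mk (tjurinaT333 a) (squarefreeMonomial S) :=
  Ideal.linearIndependent_mk_of_pairing _ (socleFunctional_eq_zero_of_mem a) _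
    (fun T => squarefreeMonomial Tᶜ)
    (fun T S hTS => (socleFunctional_squarefreeMonomial_compl_mul _ S T).trans (if_neg hTS.symm))
    (fun T => (socleFunctional_squarefreeMonomial_compl_mul _ T T).trans (if_pos rfl))

theorem mk_X_zero (a : ℂ) : Ideal.Quotient.mk (tjurinaT333 a) (X 0) = 0 :=
  Ideal.Quotient.eq_zero_iff_mem.2 (X_zero_mem a)

theorem mk_X_succ_sq (a : ℂ) (j : Fin 3) :
    Ideal.Quotient.mk (tjurinaT333 a) (X j.succ) ^ 2 =
      algebraMap ℂ _ (-(a / 3)) * (Ideal.Quotient.mk (tjurinaT333 a) (X (j + 1).succ) *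
        Ideal.Quotient.mk (tjurinaT333 a) (X (j + 2).succ)) := by
  rw [← sub_eq_zero, ← Ideal.Quotient.mk_algebraMap, algebraMap_eq, ← map_pow, ← map_mul,
    ← map_mul, ← map_sub]
  exact Ideal.Quotient.eq_zero_iff_mem.2 (X_succ_sq_sub_mem a j)

theorem mk_X_succ_sq_mul_eq_zero {a : ℂ} (ha : a ^ 3 + 27 ≠ 0) {j k : Fin 3} (hjk : j ≠ k) :
    Ideal.Quotient.mk (tjurinaT333 a) (X j.succ) ^ 2 *
      Ideal.Quotient.mk (tjurinaT333 a) (X k.succ) = 0 := by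
  have hcyc : j + 1 + 1 = j + 2 ∧ j + 1 + 2 = j ∧ j + 2 + 1 = j ∧ j + 2 + 2 = j + 1 := by
    fin_cases j <;> decide
  have hrel := sq_mul_eq_zero_of_sq_eq_mul (mk_X_succ_sq a j)
    (by simpa only [hcyc] using mk_X_succ_sq a (j + 1))
    (by simpa only [hcyc] using mk_X_succ_sq a (j + 2))
  have hunit :
      IsUnit (1 - algebraMap ℂ (MvPolynomial (Fin 4) ℂ ⧸ tjurinaT333 a) (-(a / 3)) ^ 3) := by
    rw [← map_pow, ← map_one (algebraMap ℂ _), ← map_sub]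
    refine (isUnit_iff_ne_zero.2 fun h => ha ?_).map _
    linear_combination 27 * h
  have hk : k = j + 1 ∨ k = j + 2 := by
    fin_cases j <;> fin_cases k <;> simp_all
  rcases hk with rfl | rfl
  · exact hunit.mul_right_eq_zero.1 hrel.1
  · exact hunit.mul_right_eq_zero.1 hrel.2

theorem mk_X_mul_mem_span_squarefreeMonomial {a : ℂ} (ha : a ^ 3 + 27 ≠ 0) :
    ∀ x ∈ Set.range fun i => Ideal.Quotient.mk (tjurinaT333 a) (X i),
    ∀ m ∈ Set.range fun S => Ideal.Quotient.mk (tjurinaT333 a) (squarefreeMonomial S),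
    x * m ∈ Submodule.span ℂ
      (Set.range fun S => Ideal.Quotient.mk (tjurinaT333 a) (squarefreeMonomial S)) := by
  rintro _ ⟨i, rfl⟩ _ ⟨S, rfl⟩
  have hM (T : Finset (Fin 3)) : Ideal.Quotient.mk (tjurinaT333 a) (squarefreeMonomial T) ∈
      Submodule.span ℂ
        (Set.range fun S => Ideal.Quotient.mk (tjurinaT333 a) (squarefreeMonomial S)) :=
    Submodule.subset_span ⟨T, rfl⟩
  dsimp only
  cases i using Fin.cases with
  | zero => rw [mk_X_zero, zero_mul]; exact Submodule.zero_mem _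
  | succ j =>
    by_cases hj : j ∈ S
    · rw [squarefreeMonomial_eq_mul_erase hj, map_mul, ← mul_assoc, ← sq]
      rcases (S.erase j).eq_empty_or_nonempty with hT | ⟨k, hk⟩
      · have hpair : squarefreeMonomial {j + 1, j + 2} = X (j + 1).succ * X (j + 2).succ :=
          Finset.prod_pair (by fin_cases j <;> decide)
        rw [hT, squarefreeMonomial, Finset.prod_empty, map_one, mul_one, mk_X_succ_sq,
          ← Algebra.smul_def, ← map_mul, ← hpair]
        exact Submodule.smul_mem _ _ (hM _)
      · rw [squarefreeMonomial_eq_mul_erase hk, map_mul, ← mul_assoc,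
          mk_X_succ_sq_mul_eq_zero ha (Finset.ne_of_mem_erase hk).symm, zero_mul]
        exact Submodule.zero_mem _
    · rw [← map_mul, ← squarefreeMonomial_insert hj]
      exact hM _

end TjurinaT333

/-- For `a^3 + 27 ≠ 0`, the Tjurina algebra of the `T_{333}` singularity has dimension 8. -/
theorem tjurina_T333 (a : ℂ) (ha : a ^ 3 + 27 ≠ 0) :
    Module.finrank ℂ (MvPolynomial (Fin 4) ℂ ⧸ tjurinaT333 a) = 8 := by
  have hspan := Algebra.span_eq_top_of_mul_mem (MvPolynomial.adjoin_range_mk_X_eq_top _)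
    (TjurinaT333.mk_X_mul_mem_span_squarefreeMonomial ha)
    (Submodule.subset_span ⟨∅, by simp [TjurinaT333.squarefreeMonomial]⟩)
  rw [Module.finrank_eq_card_basis
      (Module.Basis.mk (TjurinaT333.linearIndependent_mk_squarefreeMonomial a) hspan.ge),
    Fintype.card_finset, Fintype.card_fin]
  norm_num
end

section
/- The polynomial χ(t) = t^22 - (1/2)t^19 + (1/2)t^16 + (1/2)t^15 - (1/2)t^14 - (1/2)t^12 + (1/2)t^11 - (1/2)t^10 - (1/2)t^8 + (1/2)t^7 + (1/2)t^6 - (1/2)t^3 + 1 is irreducible over Q. -/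
/-!
Reduce modulo 89. There `2 χ` becomes `2 (X ^ 22 - s)` for an explicit `s` of degree `< 22`, and
Rabin's test applies: a polynomial `f` of degree `n` over `𝔽_q` is irreducible as soon as
`f ∣ X ^ q ^ n - X` and `X ^ q ^ (n / ℓ) - X` is a unit modulo `f` for every prime `ℓ ∣ n`
(an irreducible factor of degree `d` divides `X ^ q ^ m - X` exactly when `d ∣ m`).
Both conditions are decided by computing in `𝔽_89[X] / (X ^ 22 - s)` on coefficient lists.
Frobenius is `𝔽_89`-linear, so it is applied through the precomputed table of the
`X ^ (89 i)`. The two units for `ℓ = 2, 11` are tested at once through their product `w`, which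
is certified by the product of its conjugates `w ^ 89 ^ i`, `0 < i < 22`: multiplying by it
turns `w` into its norm, a nonzero constant. Irreducibility then lifts from `𝔽_89` to `ℤ`,
since `2 χ` is primitive of the same degree, and from `ℤ` to `ℚ` by Gauss's lemma.
-/

open Polynomial

/-- The characteristic polynomial of Frobenius for the `E_6` example. -/
noncomputable def chiE6 : ℚ[X] :=
  X ^ 22 - C (1/2) * X ^ 19 + C (1/2) * X ^ 16 + C (1/2) * X ^ 15 - C (1/2) * X ^ 14
    - C (1/2) * X ^ 12 + C (1/2) * X ^ 11 - C (1/2) * X ^ 10 - C (1/2) * X ^ 8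
    + C (1/2) * X ^ 7 + C (1/2) * X ^ 6 - C (1/2) * X ^ 3 + 1

theorem Polynomial.irreducible_of_rabin {k : Type*} [CommRing k] [IsDomain k] [Finite k]
    {f : k[X]} (hf : 0 < f.natDegree) (hdvd : f ∣ X ^ Nat.card k ^ f.natDegree - X)
    (hcop : ∀ ℓ m, ℓ.Prime → f.natDegree = ℓ * m →
      IsCoprime f (X ^ Nat.card k ^ m - X)) :
    Irreducible f := by
  classical
  have := Fintype.ofFinite k
  let := Fintype.fieldOfDomain k
  have hf0 : f ≠ 0 := ne_zero_of_natDegree_gt hf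
  obtain ⟨g, hg, hgf⟩ :=
    WfDvdMonoid.exists_irreducible_factor (not_isUnit_of_natDegree_pos f hf) hf0
  obtain ⟨m, hm⟩ := hg.natDegree_dvd_of_dvd_X_pow_card_pow_sub_X (hgf.trans hdvd)
  have hm1 : m = 1 := by
    by_contra hm1
    obtain ⟨m', hm'⟩ := Nat.minFac_dvd m
    have hcop' := hcop m.minFac (g.natDegree * m') (Nat.minFac_prime hm1)
      (by rw [hm, mul_left_comm, ← hm'])
    exact hg.not_isUnit <| hcop'.isUnit_of_dvd' hgf
      (hg.natDegree_dvd_iff_dvd_X_pow_card_pow_sub_X.mp (dvd_mul_right _ _))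
  exact (associated_of_dvd_of_natDegree_le hgf hf0 (by rw [hm, hm1, mul_one])).irreducible hg

theorem Polynomial.IsPrimitive.irreducible_of_irreducible_map_of_natDegree_eq {R S : Type*}
    [CommRing R] [IsDomain R] [CommRing S] [IsDomain S] {φ : R →+* S} {f : R[X]}
    (hf : f.IsPrimitive) (hdeg : (f.map φ).natDegree = f.natDegree)
    (h_irr : Irreducible (f.map φ)) : Irreducible f := by
  refine ⟨fun h => h_irr.not_isUnit (h.map (mapRingHom φ)), fun a b hab => ?_⟩
  have isUnit_of_map : ∀ a b : R[X], f = a * b → IsUnit (a.map φ) → IsUnit a := by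
    intro a b hab ha
    have hmap : f.map φ = a.map φ * b.map φ := by rw [hab, Polynomial.map_mul]
    have hb0 : b.map φ ≠ 0 := right_ne_zero_of_mul (hmap ▸ h_irr.ne_zero)
    have ha0 : a ≠ 0 := left_ne_zero_of_mul (hab ▸ hf.ne_zero)
    have hdeg_a : a.natDegree = 0 := by
      have h1 := natDegree_mul ha.ne_zero hb0
      have h2 := natDegree_mul ha0 (right_ne_zero_of_mul (hab ▸ hf.ne_zero))
      have h3 : (b.map φ).natDegree ≤ b.natDegree := natDegree_map_le
      rw [← hmap, natDegree_eq_zero_of_isUnit ha] at h1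
      rw [← hab] at h2
      omega
    rw [eq_C_of_natDegree_eq_zero hdeg_a] at hab ⊢
    exact isUnit_C.mpr (isPrimitive_iff_isUnit_of_C_dvd.mp hf _ (Dvd.intro _ hab.symm))
  refine (h_irr.isUnit_or_isUnit (by rw [hab, Polynomial.map_mul])).imp (isUnit_of_map a b hab)
    (isUnit_of_map b a ?_)
  rw [hab, mul_comm]

theorem AdjoinRoot.isCoprime_of_isUnit_mk {R : Type*} [CommRing R] {f g : R[X]}
    (h : IsUnit (AdjoinRoot.mk f g)) : IsCoprime f g := by
  obtain ⟨u, hu⟩ := h.exists_right_inv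
  induction u using AdjoinRoot.induction_on with | ih q => ?_
  rw [← map_mul, ← map_one (AdjoinRoot.mk f), AdjoinRoot.mk_eq_mk] at hu
  obtain ⟨t, ht⟩ := hu
  exact ⟨-t, q, by linear_combination ht⟩

namespace CoeffList

variable {R : Type*} [CommRing R]

noncomputable def toPoly : List R → R[X]
  | [] => 0
  | c :: l => C c + X * toPoly l

def add : List R → List R → List R
  | [], b => b
  | a, [] => a
  | x :: a, y :: b => (x + y) :: add a b

theorem toPoly_add : ∀ a b : List R, toPoly (add a b) = toPoly a + toPoly b
  | [], b => by simp [add, toPoly]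
  | x :: a, [] => by simp [add, toPoly]
  | x :: a, y :: b => by simp only [add, toPoly, toPoly_add a b, C_add]; ring

theorem length_add : ∀ a b : List R, (add a b).length = max a.length b.length
  | [], b => by simp [add]
  | x :: a, [] => by simp [add]
  | x :: a, y :: b => by simp [add, length_add a b, Nat.succ_max_succ]

theorem toPoly_map_mul (c : R) (l : List R) : toPoly (l.map (c * ·)) = C c * toPoly l := by
  induction l with
  | nil => simp [toPoly]
  | cons y l ih => simp only [List.map_cons, toPoly, ih, C_mul]; ring

theorem toPoly_eq_zero_of_forall_eq_zero {l : List R} (h : ∀ c ∈ l, c = 0) : toPoly l = 0 := by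
  induction l with
  | nil => rfl
  | cons c l ih =>
    simp only [List.mem_cons, forall_eq_or_imp] at h
    simp [toPoly, h.1, ih h.2]

theorem toPoly_eq_take_add (n : ℕ) (w : List R) (hw : w.length ≤ n + 1) :
    toPoly w = toPoly (w.take n) + C (w.getD n 0) * X ^ n := by
  induction n generalizing w with
  | zero =>
    match w, hw with
    | [], _ => simp [toPoly]
    | [c], _ => simp [toPoly]
  | succ n ih =>
    match w, hw with
    | [], _ => simp [toPoly]
    | c :: w, hw =>
      simp only [toPoly, List.take_succ_cons, List.getD_cons_succ,
        ih w (by simpa using hw)]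
      ring

noncomputable def modulus (s : List R) : R[X] := X ^ s.length - toPoly s

theorem degree_toPoly_lt [Nontrivial R] : ∀ l : List R, (toPoly l).degree < l.length
  | [] => by simp [toPoly]
  | c :: l => by
    rw [toPoly, mul_comm, List.length_cons, Nat.cast_succ]
    refine (degree_add_le _ _).trans_lt (max_lt (degree_C_le.trans_lt ?_) ?_)
    · exact_mod_cast Nat.succ_pos _
    · rw [degree_mul_X]
      exact WithBot.add_lt_add_right WithBot.one_ne_bot (degree_toPoly_lt l)

theorem natDegree_modulus [Nontrivial R] (s : List R) : (modulus s).natDegree = s.length :=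
  natDegree_eq_of_degree_eq_some <| by
    rw [modulus, degree_sub_eq_left_of_degree_lt] <;> rw [degree_X_pow]
    exact degree_toPoly_lt s

noncomputable def residue (s l : List R) : AdjoinRoot (modulus s) :=
  AdjoinRoot.mk (modulus s) (toPoly l)

def mulX (s v : List R) : List R :=
  let w := 0 :: v
  add (w.take s.length) (s.map (w.getD s.length 0 * ·))

variable {s : List R}

theorem residue_add (a b : List R) : residue s (add a b) = residue s a + residue s b := by
  simp [residue, toPoly_add]

theorem root_pow_length :
    AdjoinRoot.root (modulus s) ^ s.length = AdjoinRoot.mk _ (toPoly s) := by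
  rw [← AdjoinRoot.mk_X, ← map_pow, AdjoinRoot.mk_eq_mk]
  exact dvd_rfl

theorem length_mulX (v : List R) : (mulX s v).length = s.length := by
  simp [mulX, length_add]

theorem residue_mulX (v : List R) (hv : v.length ≤ s.length) :
    residue s (mulX s v) = AdjoinRoot.root _ * residue s v := by
  have h := toPoly_eq_take_add s.length (0 :: v) (by simpa using hv)
  simp only [toPoly, C_0, zero_add] at h
  simp only [mulX, residue, toPoly_add, toPoly_map_mul, map_add, map_mul]
  rw [← root_pow_length, ← AdjoinRoot.mk_X, ← map_pow, ← map_mul, ← map_mul, ← map_add,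
    ← h]

theorem residue_cons (c : R) (l : List R) :
    residue s (c :: l) = AdjoinRoot.of _ c + AdjoinRoot.root _ * residue s l := by
  simp [residue, toPoly]

theorem residue_zero_one : residue s [0, 1] = AdjoinRoot.root _ := by
  simp [residue, toPoly]

def mulMod (s a b : List R) : List R :=
  a.foldr (fun c acc => add (b.map (c * ·)) (mulX s acc)) []

theorem length_mulMod_le (a : List R) {b : List R} (hb : b.length ≤ s.length) :
    (mulMod s a b).length ≤ s.length := by
  cases a with
  | nil => simp [mulMod]
  | cons c a =>
    simp only [mulMod, List.foldr_cons, length_add, List.length_map]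
    rw [← mulMod, length_mulX]
    omega

theorem residue_mulMod (a : List R) {b : List R} (hb : b.length ≤ s.length) :
    residue s (mulMod s a b) = residue s a * residue s b := by
  induction a with
  | nil => simp [mulMod, residue, toPoly]
  | cons c a ih =>
    have hlen := length_mulMod_le a hb
    simp only [mulMod, List.foldr_cons] at ih hlen ⊢
    rw [residue_add, residue_mulX _ hlen, ih, residue_cons]
    simp only [residue, toPoly_map_mul, map_mul, AdjoinRoot.mk_C]
    ring

theorem length_iterate_mulX_le (k : ℕ) {v : List R} (hv : v.length ≤ s.length) :
    ((mulX s)^[k] v).length ≤ s.length := by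
  cases k with
  | zero => exact hv
  | succ k => rw [Function.iterate_succ_apply', length_mulX]

theorem residue_iterate_mulX (k : ℕ) {v : List R} (hv : v.length ≤ s.length) :
    residue s ((mulX s)^[k] v) = AdjoinRoot.root _ ^ k * residue s v := by
  induction k with
  | zero => simp
  | succ k ih =>
    rw [Function.iterate_succ_apply', residue_mulX _ (length_iterate_mulX_le k hv), ih]
    ring

def linComb : List R → List (List R) → List R
  | c :: cs, r :: rs => add (r.map (c * ·)) (linComb cs rs)
  | _, _ => []

theorem linComb_iterate_mulMod (t : List R) (ht : t.length ≤ s.length) :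
    ∀ (v r : List R) (m : ℕ), r.length ≤ s.length → v.length ≤ m →
      (linComb v (List.iterate (mulMod s · t) r m)).length ≤ s.length ∧
      residue s (linComb v (List.iterate (mulMod s · t) r m)) =
        residue s r * aeval (residue s t) (toPoly v)
  | [], r, m, _, _ => by cases m <;> simp [linComb, residue, toPoly]
  | c :: v, r, m + 1, hr, hv => by
    obtain ⟨ih_len, ih⟩ := linComb_iterate_mulMod t ht v (mulMod s r t) m
      (length_mulMod_le r ht) (by simpa using hv)
    simp only [List.iterate, linComb, length_add, List.length_map, residue_add, ih,
      residue_mulMod r ht]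
    refine ⟨by omega, ?_⟩
    simp only [residue, toPoly_map_mul, toPoly, map_mul, map_add, AdjoinRoot.mk_C, aeval_C,
      AdjoinRoot.algebraMap_eq, aeval_X]
    ring

section Frobenius

variable (p : ℕ) (s : List (ZMod p))

def frobTable : List (List (ZMod p)) :=
  List.iterate (mulMod s · ((mulX s)^[p] [1])) [1] s.length

def frob (v : List (ZMod p)) : List (ZMod p) := linComb v (frobTable p s)

def frobSubX (e : ℕ) : List (ZMod p) := add ((frob p s)^[e] [0, 1]) [0, -1]

def conjProd (w : List (ZMod p)) : List (ZMod p) :=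
  (List.iterate (frob p s) (frob p s w) (s.length - 1)).foldr (mulMod s) [1]

variable {p s}

theorem length_frob_le (hs : 0 < s.length) {v : List (ZMod p)} (hv : v.length ≤ s.length) :
    (frob p s v).length ≤ s.length :=
  (linComb_iterate_mulMod _ (length_iterate_mulX_le p (v := [1]) hs) v [1] _ hs hv).1

theorem residue_frob (hp : p.Prime) (hs : 0 < s.length) {v : List (ZMod p)}
    (hv : v.length ≤ s.length) : residue s (frob p s v) = residue s v ^ p := by
  have := Fact.mk hp
  have hone : residue s [1] = 1 := by simp [residue, toPoly]
  rw [frob, frobTable,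
    (linComb_iterate_mulMod _ (length_iterate_mulX_le p (v := [1]) hs) v [1] _ hs hv).2,
    residue_iterate_mulX p (v := [1]) hs, hone, one_mul, mul_one, residue, ← AdjoinRoot.aeval_eq,
    ← map_pow, ← ZMod.expand_card, expand_aeval]

theorem length_iterate_frob_le (hs : 1 < s.length) (e : ℕ) :
    ((frob p s)^[e] [0, 1]).length ≤ s.length := by
  induction e with
  | zero => exact hs
  | succ e ih => exact Function.iterate_succ_apply' .. ▸ length_frob_le (by omega) ih

theorem residue_iterate_frob (hp : p.Prime) (hs : 1 < s.length) (e : ℕ) :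
    residue s ((frob p s)^[e] [0, 1]) = AdjoinRoot.root _ ^ p ^ e := by
  induction e with
  | zero => simp [residue_zero_one]
  | succ e ih =>
    rw [Function.iterate_succ_apply', residue_frob hp (by omega) (length_iterate_frob_le hs e), ih,
      ← pow_mul, pow_succ]

theorem length_frobSubX_le (hs : 1 < s.length) (e : ℕ) :
    (frobSubX p s e).length ≤ s.length := by
  simpa [frobSubX, length_add] using ⟨length_iterate_frob_le hs e, hs⟩

theorem residue_frobSubX (hp : p.Prime) (hs : 1 < s.length) (e : ℕ) :
    residue s (frobSubX p s e) = AdjoinRoot.mk _ (X ^ p ^ e - X) := by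
  rw [frobSubX, residue_add, residue_iterate_frob hp hs]
  simp [residue, toPoly, AdjoinRoot.mk_X, sub_eq_add_neg]

theorem length_conjProd_le (hs : 0 < s.length) (w : List (ZMod p)) :
    (conjProd p s w).length ≤ s.length := by
  unfold conjProd
  induction List.iterate (frob p s) (frob p s w) (s.length - 1) with
  | nil => exact hs
  | cons x l ih => exact length_mulMod_le x ih

theorem isUnit_residue_of_mulMod_conjProd_eq (hp : p.Prime) (hs : 0 < s.length)
    {w : List (ZMod p)} {c : ZMod p} (hc : c ≠ 0) {k : ℕ}
    (h : mulMod s w (conjProd p s w) = c :: List.replicate k 0) : IsUnit (residue s w) := by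
  have := Fact.mk hp
  have hconst : residue s (c :: List.replicate k 0) = AdjoinRoot.of _ c := by
    rw [residue_cons, residue, toPoly_eq_zero_of_forall_eq_zero (by simp)]
    simp
  rw [← h, residue_mulMod w (length_conjProd_le hs w)] at hconst
  exact isUnit_of_mul_isUnit_left (hconst ▸ hc.isUnit.map _)

theorem modulus_dvd_X_pow_sub_X (hp : p.Prime) (hs : 1 < s.length) {e : ℕ}
    (h : ∀ c ∈ frobSubX p s e, c = 0) : modulus s ∣ X ^ p ^ e - X := by
  rw [← AdjoinRoot.mk_eq_zero, ← residue_frobSubX hp hs, residue,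
    toPoly_eq_zero_of_forall_eq_zero h, map_zero]

end Frobenius

end CoeffList

open CoeffList

-- `X ^ 22 ≡ chiTail` modulo `2 χ`, as `45 = 1 / 2` in `ZMod 89`.
def chiTail : List (ZMod 89) :=
  [-1, 0, 0, 45, 0, 0, -45, -45, 45, 0, 45, -45, 45, 0, 45, -45, -45, 0, 0, 45, 0, 0]

noncomputable def chiE6Int : ℤ[X] :=
  2 * X ^ 22 - X ^ 19 + X ^ 16 + X ^ 15 - X ^ 14 - X ^ 12 + X ^ 11 - X ^ 10 - X ^ 8
    + X ^ 7 + X ^ 6 - X ^ 3 + 2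

theorem chiE6Int_map_rat : chiE6Int.map (Int.castRingHom ℚ) = 2 * chiE6 := by
  simp only [chiE6Int, chiE6, Polynomial.map_add, Polynomial.map_sub, Polynomial.map_mul,
    Polynomial.map_pow, Polynomial.map_X, Polynomial.map_ofNat]
  have h : (2 : ℚ[X]) * C (1 / 2) = 1 := by rw [← C_ofNat, ← C_mul]; norm_num
  linear_combination -(-X ^ 19 + X ^ 16 + X ^ 15 - X ^ 14 - X ^ 12 + X ^ 11 - X ^ 10 - X ^ 8
    + X ^ 7 + X ^ 6 - X ^ 3 : ℚ[X]) * h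

theorem chiE6Int_map_zmod :
    chiE6Int.map (Int.castRingHom (ZMod 89)) = C 2 * modulus chiTail := by
  simp only [chiE6Int, modulus, chiTail, toPoly, Polynomial.map_add, Polynomial.map_sub,
    Polynomial.map_mul, Polynomial.map_pow, Polynomial.map_X, Polynomial.map_ofNat, List.length,
    C_neg, C_0, C_1, map_ofNat C]
  ring_nf
  reduce_mod_char

theorem natDegree_chiE6Int : chiE6Int.natDegree = 22 := by
  unfold chiE6Int
  compute_degree!

theorem isPrimitive_chiE6Int : chiE6Int.IsPrimitive := fun r hr => by
  have h11 : chiE6Int.coeff 11 = 1 := by simp [chiE6Int, coeff_X_pow]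
  exact isUnit_of_dvd_one (h11 ▸ (C_dvd_iff_dvd_coeff r _).mp hr 11)

theorem isUnit_residue_chiTail :
    IsUnit (residue chiTail (mulMod chiTail (frobSubX 89 chiTail 2) (frobSubX 89 chiTail 11))) :=
  -- `69` is the norm of the product.
  isUnit_residue_of_mulMod_conjProd_eq (by norm_num) (by decide) (c := 69) (k := 21) (by decide)
    (by decide +kernel)

theorem irreducible_modulus_chiTail : Irreducible (modulus chiTail) := by
  have hp : Nat.Prime 89 := by norm_num
  have := Fact.mk hp
  have hn : (modulus chiTail).natDegree = 22 := natDegree_modulus chiTail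
  have hdvd := modulus_dvd_X_pow_sub_X (s := chiTail) (e := 22) hp (by decide) (by decide +kernel)
  have hunit := isUnit_residue_chiTail
  rw [residue_mulMod _ (length_frobSubX_le (by decide) _), IsUnit.mul_iff,
    residue_frobSubX hp (by decide), residue_frobSubX hp (by decide)] at hunit
  have h2 := AdjoinRoot.isCoprime_of_isUnit_mk hunit.1
  have h11 := AdjoinRoot.isCoprime_of_isUnit_mk hunit.2
  refine irreducible_of_rabin (by omega) ?_ ?_ <;> rw [Nat.card_zmod]
  · rw [hn]
    exact hdvd
  · intro ℓ m hℓ h22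
    rw [hn] at h22
    rcases hℓ.dvd_mul.mp (show ℓ ∣ 2 * 11 from ⟨m, h22⟩) with h | h
    · rw [(Nat.prime_dvd_prime_iff_eq hℓ Nat.prime_two).mp h] at h22
      obtain rfl : m = 11 := by omega
      exact h11
    · rw [(Nat.prime_dvd_prime_iff_eq hℓ (by norm_num)).mp h] at h22
      obtain rfl : m = 2 := by omega
      exact h2

theorem isUnit_two_zmod89 : IsUnit (2 : ZMod 89) := IsUnit.of_mul_eq_one 45 (by decide)

theorem irreducible_chiE6Int_map_zmod :
    Irreducible (chiE6Int.map (Int.castRingHom (ZMod 89))) := by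
  rw [chiE6Int_map_zmod]
  exact (associated_unit_mul_left _ _ (isUnit_C.mpr isUnit_two_zmod89)).symm.irreducible
    irreducible_modulus_chiTail

theorem natDegree_chiE6Int_map_zmod :
    (chiE6Int.map (Int.castRingHom (ZMod 89))).natDegree = chiE6Int.natDegree := by
  have := Fact.mk (by norm_num : Nat.Prime 89)
  rw [chiE6Int_map_zmod, natDegree_C_mul_of_isUnit isUnit_two_zmod89, natDegree_modulus,
    natDegree_chiE6Int]
  rfl

/-- `chiE6` is irreducible over `ℚ`. -/
theorem chiE6_irreducible : Irreducible chiE6 := by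
  have := Fact.mk (by norm_num : Nat.Prime 89)
  have hℤ := isPrimitive_chiE6Int.irreducible_of_irreducible_map_of_natDegree_eq
    natDegree_chiE6Int_map_zmod irreducible_chiE6Int_map_zmod
  have hℚ := (IsPrimitive.Int.irreducible_iff_irreducible_map_cast isPrimitive_chiE6Int).mp hℤ
  rw [chiE6Int_map_rat] at hℚ
  have h2 : IsUnit (2 : ℚ[X]) := C_ofNat (R := ℚ) 2 ▸ isUnit_C.mpr (by norm_num)
  exact (associated_unit_mul_left _ _ h2).irreducible hℚ
end

section
/- The polynomial χ(t) = t^22 - t^20 + (1/2)t^18 + (1/2)t^11 + (1/2)t^4 - t^2 + 1 has no monic irreducible factor in Q[t] that is a cyclotomic polynomial; equivalently, none of its complex roots is a root of unity. -/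
/-! Clearing denominators, `2χ` is an integer polynomial with `2χ(2) = 2 · 3277829`, and
`3277829` is prime. If `Φₙ ∣ χ` with `n ≥ 2`, then `Φₙ(2)` divides `2 · 3277829`, is odd (it
divides `2ⁿ - 1`) and exceeds `1`, so `Φₙ(2) = 3277829 =: p`. Then `2` is a primitive `n`-th
root of unity modulo `p`, so `n ∣ p - 1 = 4 · 819457`. As `φ(n) ≤ deg χ = 22`, neither `p` nor
the prime `819457` divides `n`, whence `n ∣ 4` and `p = Φₙ(2) ∣ 2⁴ - 1 = 15`, absurd. -/

open Polynomial

/-- The characteristic polynomial of Frobenius for the `T_{333}` example. -/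
noncomputable def chiT333 : ℚ[X] :=
  X ^ 22 - X ^ 20 + C (1/2) * X ^ 18 + C (1/2) * X ^ 11 + C (1/2) * X ^ 4 - X ^ 2 + 1

theorem Nat.Prime.not_dvd_of_totient_lt {p n : ℕ} (hp : p.Prime) (hn : n ≠ 0)
    (h : n.totient < p - 1) : ¬ p ∣ n := fun hpn => by
  have := Nat.le_of_dvd (Nat.totient_pos.mpr (Nat.pos_of_ne_zero hn)) (Nat.totient_dvd_of_dvd hpn)
  rw [Nat.totient_prime hp] at this
  omega

namespace Polynomial

theorem cyclotomic_int_dvd_of_dvd_map {n : ℕ} {F : ℤ[X]}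
    (h : cyclotomic n ℚ ∣ F.map (Int.castRingHom ℚ)) : cyclotomic n ℤ ∣ F := by
  rwa [← map_dvd_map (Int.castRingHom ℚ) (Int.castRingHom ℚ).injective_int
    (cyclotomic.monic n ℤ), map_cyclotomic]

theorem cyclotomic_eval_dvd_pow_sub_one {R : Type*} [CommRing R] (n : ℕ) (b : R) :
    (cyclotomic n R).eval b ∣ b ^ n - 1 := by
  simpa using eval_dvd (x := b) (cyclotomic.dvd_X_pow_sub_one n R)

theorem odd_natAbs_cyclotomic_eval_two {n : ℕ} (hn : n ≠ 0) :
    Odd ((cyclotomic n ℤ).eval 2).natAbs :=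
  have hodd : Odd ((2 : ℤ) ^ n - 1) := (Int.even_pow.mpr ⟨even_two, hn⟩).sub_odd odd_one
  hodd.natAbs.of_dvd_nat (Int.natAbs_dvd_natAbs.mpr (cyclotomic_eval_dvd_pow_sub_one n 2))

/-- `b` is a primitive `n`-th root of unity modulo `p`, and `(ZMod p)ˣ` has order `p - 1`. -/
theorem dvd_sub_one_of_dvd_cyclotomic_eval {n p : ℕ} [hp : Fact p.Prime] {b : ℤ}
    (hpn : ¬ p ∣ n) (h : (p : ℤ) ∣ (cyclotomic n ℤ).eval b) : n ∣ p - 1 := by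
  have : NeZero (n : ZMod p) := NeZero.of_not_dvd (ZMod p) hpn
  have hroot : IsRoot (cyclotomic n (ZMod p)) (b : ZMod p) := by
    rw [IsRoot, ← map_cyclotomic_int, eval_intCast_map, eq_intCast,
      ZMod.intCast_zmod_eq_zero_iff_dvd]
    exact h
  have hprim := isRoot_cyclotomic_iff.mp hroot
  have hn : n ≠ 0 := by rintro rfl; exact hpn (dvd_zero p)
  exact hprim.dvd_of_pow_eq_one _ (ZMod.pow_card_sub_one_eq_one (hprim.ne_zero hn))

theorem pow_ne_one_of_forall_not_cyclotomic_dvd {K : Type*} [Field K] [CharZero K] {f : ℚ[X]}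
    (hf : ∀ n : ℕ, 1 ≤ n → ¬ cyclotomic n ℚ ∣ f) {z : K} (hz : aeval z f = 0) {n : ℕ}
    (hn : 1 ≤ n) : z ^ n ≠ 1 := fun hzn => by
  have hpos : 0 < orderOf z := orderOf_pos_iff.mpr (isOfFinOrder_iff_pow_eq_one.mpr ⟨n, hn, hzn⟩)
  refine hf _ hpos ?_
  rw [cyclotomic_eq_minpoly_rat (IsPrimitiveRoot.orderOf z) hpos]
  exact minpoly.dvd ℚ z hz

end Polynomial

noncomputable def twoChiT333 : ℤ[X] :=
  C 2 * X ^ 22 - C 2 * X ^ 20 + X ^ 18 + X ^ 11 + X ^ 4 - C 2 * X ^ 2 + C 2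

theorem twoChiT333_map : twoChiT333.map (Int.castRingHom ℚ) = C 2 * chiT333 := by
  have h : (2 : ℚ[X]) * C (1 / 2 : ℚ) = 1 := by
    rw [← map_ofNat (C : ℚ →+* ℚ[X]) 2, ← C_mul]
    norm_num
  simp only [twoChiT333, chiT333, Polynomial.map_add, Polynomial.map_sub, Polynomial.map_mul,
    Polynomial.map_pow, Polynomial.map_X, map_ofNat, Polynomial.map_ofNat]
  linear_combination (-(X ^ 4 + X ^ 11 + X ^ 18) : ℚ[X]) * h

theorem twoChiT333_eval_two : twoChiT333.eval 2 = 2 * 3277829 := by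
  norm_num [twoChiT333]

theorem chiT333_eval_one : chiT333.eval 1 = 3 / 2 := by
  norm_num [chiT333]

theorem chiT333_ne_zero : chiT333 ≠ 0 := fun h => by
  have := chiT333_eval_one
  rw [h, eval_zero] at this
  norm_num at this

theorem chiT333_natDegree_le : chiT333.natDegree ≤ 22 := by
  unfold chiT333
  compute_degree

theorem totient_le_of_cyclotomic_dvd_chiT333 {n : ℕ} (hdvd : cyclotomic n ℚ ∣ chiT333) :
    n.totient ≤ 22 := by
  have := natDegree_le_of_dvd hdvd chiT333_ne_zero
  rw [natDegree_cyclotomic] at this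
  exact this.trans chiT333_natDegree_le

theorem cyclotomic_eval_two_eq_of_dvd_chiT333 {n : ℕ} (hdvd : cyclotomic n ℚ ∣ chiT333)
    (hn : 2 ≤ n) : ((cyclotomic n ℤ).eval 2).natAbs = 3277829 := by
  have hp : Nat.Prime 3277829 := by norm_num
  have hdvdZ : cyclotomic n ℤ ∣ twoChiT333 :=
    cyclotomic_int_dvd_of_dvd_map (twoChiT333_map ▸ hdvd.mul_left _)
  have hdvd2p : ((cyclotomic n ℤ).eval 2).natAbs ∣ 2 * 3277829 := by
    simpa [twoChiT333_eval_two] using Int.natAbs_dvd_natAbs.mpr (eval_dvd (x := 2) hdvdZ)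
  have hodd := odd_natAbs_cyclotomic_eval_two (by omega : n ≠ 0)
  have hgt : 1 < ((cyclotomic n ℤ).eval 2).natAbs := by
    simpa using sub_one_lt_natAbs_cyclotomic_eval (q := 2) hn (by norm_num)
  have hdvdp := (Nat.coprime_two_right.mpr hodd).dvd_of_dvd_mul_left hdvd2p
  exact (hp.eq_one_or_self_of_dvd _ hdvdp).resolve_left (by omega)

theorem dvd_four_of_cyclotomic_dvd_chiT333 {n : ℕ} (hdvd : cyclotomic n ℚ ∣ chiT333)
    (hn : 2 ≤ n) : n ∣ 4 := by
  have hp : Nat.Prime 3277829 := by norm_num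
  have hq : Nat.Prime 819457 := by norm_num
  have hφ := totient_le_of_cyclotomic_dvd_chiT333 hdvd
  have : Fact (Nat.Prime 3277829) := ⟨hp⟩
  have hn_dvd : n ∣ 4 * 819457 := by
    refine dvd_sub_one_of_dvd_cyclotomic_eval (b := 2)
      (hp.not_dvd_of_totient_lt (by omega) (by omega)) ?_
    rw [Int.natCast_dvd, cyclotomic_eval_two_eq_of_dvd_chiT333 hdvd hn]
  have hcop : n.Coprime 819457 :=
    (hq.coprime_iff_not_dvd.mpr (hq.not_dvd_of_totient_lt (by omega) (by omega))).symm
  exact hcop.dvd_of_dvd_mul_right hn_dvd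

theorem not_cyclotomic_dvd_chiT333 {n : ℕ} (hn : 1 ≤ n) : ¬ cyclotomic n ℚ ∣ chiT333 := by
  intro hdvd
  obtain rfl | hn := hn.eq_or_lt
  · rw [cyclotomic_one, ← C_1, dvd_iff_isRoot, IsRoot, chiT333_eval_one] at hdvd
    norm_num at hdvd
  have h15 : (cyclotomic n ℤ).eval 2 ∣ 2 ^ 4 - 1 :=
    (cyclotomic_eval_dvd_pow_sub_one n 2).trans
      (dvd_pow_sub_one_of_dvd (dvd_four_of_cyclotomic_dvd_chiT333 hdvd hn))
  have hp15 := Int.natAbs_dvd_natAbs.mpr h15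
  rw [cyclotomic_eval_two_eq_of_dvd_chiT333 hdvd hn] at hp15
  norm_num at hp15

/-- No complex root of `chiT333` is a root of unity; equivalently, no cyclotomic
polynomial divides it in `ℚ[t]`. -/
theorem chiT333_no_cyclotomic_factor :
    (∀ n : ℕ, 1 ≤ n → ¬ (cyclotomic n ℚ ∣ chiT333)) ∧
    (∀ z : ℂ, aeval z chiT333 = 0 → ∀ n : ℕ, 1 ≤ n → z ^ n ≠ 1) :=
  ⟨fun _ => not_cyclotomic_dvd_chiT333,
    fun _ hz _ => pow_ne_one_of_forall_not_cyclotomic_dvd (fun _ => not_cyclotomic_dvd_chiT333) hz⟩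
end

section
/- Let G ≤ GL(5,C) be the set of invertible 5×5 matrices (a_{ij})_{0≤i,j≤4} with a_{i0} = 0 for i = 1,2,3,4, a_{12} = a_{13} = a_{14} = 0, a_{21} = a_{23} = a_{24} = 0, a_{34} = a_{43} = 0, subject to a_{00}a_{11}a_{22} = 1 and a_{33}^2 a_{44} = 1. Then G is a subgroup of GL(5,C) (closed under multiplication and inverse) and is an 11-dimensional algebraic variety (its parametrization by the free entries a_{01},a_{02},a_{03},a_{04},a_{11},a_{22},a_{31},a_{32},a_{33},a_{41},a_{42} with a_{11},a_{22},a_{33} nonzero is injective with image G). -/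
/-!
The zero pattern of `GD6` says that `A i j = 0` unless `j ≤ i` for the partial order
`1, 2 < 3, 4 < 0` on the indices. Matrices supported on a partial order form a subalgebra
(by transitivity), closed under inverses because it is finite dimensional; by antisymmetry the
diagonal entries are multiplicative on it and the determinant is their product. Hence the two
conditions `a₀₀a₁₁a₂₂ = 1`, `a₃₃²a₄₄ = 1` are preserved by products and inverses, and they force
invertibility. The parametrization is inverted by reading off the eleven free entries.
-/

open Matrix

/-- The stabilizer group `H_{u_{D_6}}`: invertible 5×5 matrices with the shape prescribed in
the `D_6` case, with `a₀₀a₁₁a₂₂ = 1` and `a₃₃²a₄₄ = 1`. -/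
def GD6 : Set (Matrix (Fin 5) (Fin 5) ℂ) :=
  {A | A.det ≠ 0 ∧
    (∀ i : Fin 5, i ≠ 0 → A i 0 = 0) ∧
    A 1 2 = 0 ∧ A 1 3 = 0 ∧ A 1 4 = 0 ∧
    A 2 1 = 0 ∧ A 2 3 = 0 ∧ A 2 4 = 0 ∧
    A 3 4 = 0 ∧ A 4 3 = 0 ∧
    A 0 0 * A 1 1 * A 2 2 = 1 ∧ A 3 3 ^ 2 * A 4 4 = 1}

/-- Parametrization of `GD6` by the 11 free entries
`(a₀₁,a₀₂,a₀₃,a₀₄,a₁₁,a₂₂,a₃₁,a₃₂,a₃₃,a₄₁,a₄₂)` (indices `0,…,10`), with `a₀₀` and `a₄₄`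
determined by the two relations. -/
noncomputable def paramD6 (v : Fin 11 → ℂ) : Matrix (Fin 5) (Fin 5) ℂ :=
  !![(v 4 * v 5)⁻¹, v 0, v 1, v 2, v 3;
     0, v 4, 0, 0, 0;
     0, 0, v 5, 0, 0;
     0, v 6, v 7, v 8, 0;
     0, v 9, v 10, 0, (v 8 ^ 2)⁻¹]

theorem Equiv.Perm.eq_one_of_forall_rel_apply {n : Type*} [Finite n] {r : n → n → Prop}
    [IsPartialOrder n r] {σ : Equiv.Perm n} (h : ∀ i, r (σ i) i) : σ = 1 := by
  have hpow : ∀ k i, r ((σ ^ k) i) i := by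
    intro k
    induction k with
    | zero => exact fun i => refl_of r i
    | succ k ih => exact fun i => trans_of r (by rw [pow_succ']; exact h _) (ih i)
  ext i
  have hback : (σ ^ (orderOf σ - 1)) (σ i) = i := by
    rw [← Equiv.Perm.mul_apply, ← pow_succ, Nat.sub_add_cancel (orderOf_pos σ),
      pow_orderOf_eq_one, Equiv.Perm.one_apply]
  have hi := hpow (orderOf σ - 1) (σ i)
  rw [hback] at hi
  exact antisymm_of r (h i) hi

namespace Matrix

variable {n : Type*} [Fintype n] [DecidableEq n]

def supportedSubalgebra (R : Type*) [CommSemiring R] (r : n → n → Prop) [IsPreorder n r] :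
    Subalgebra R (Matrix n n R) where
  carrier := {A | ∀ i j, ¬ r i j → A i j = 0}
  mul_mem' {A B} hA hB i k hik := by
    refine Finset.sum_eq_zero fun j _ => ?_
    by_cases hij : r i j
    · exact mul_eq_zero_of_right _ (hB j k fun hjk => hik (trans_of r hij hjk))
    · exact mul_eq_zero_of_left (hA i j hij) _
  add_mem' {A B} hA hB i j hij := by rw [add_apply, hA i j hij, hB i j hij, add_zero]
  algebraMap_mem' c i j hij := by
    rw [algebraMap_matrix_apply, if_neg fun (h : i = j) => hij (h ▸ refl_of r i)]

variable {R : Type*} {r : n → n → Prop}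

theorem mul_apply_self_of_mem_supportedSubalgebra [CommSemiring R] [IsPartialOrder n r]
    {A B : Matrix n n R} (hA : A ∈ supportedSubalgebra R r) (hB : B ∈ supportedSubalgebra R r)
    (i : n) : (A * B) i i = A i i * B i i := by
  refine Finset.sum_eq_single i (fun j _ hji => ?_) (by simp)
  by_cases hij : r i j
  · exact mul_eq_zero_of_right _ (hB j i fun hji' => hji (antisymm_of r hji' hij))
  · exact mul_eq_zero_of_left (hA i j hij) _

theorem det_of_mem_supportedSubalgebra [CommRing R] [IsPartialOrder n r]
    {A : Matrix n n R} (hA : A ∈ supportedSubalgebra R r) : A.det = ∏ i, A i i := by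
  rw [det_apply, Finset.sum_eq_single 1 (fun σ _ hσ => ?_) (by simp)]
  · simp
  obtain ⟨i, hi⟩ : ∃ i, ¬ r (σ i) i := by
    by_contra! h
    exact hσ (Equiv.Perm.eq_one_of_forall_rel_apply h)
  rw [Finset.prod_eq_zero (f := fun j => A (σ j) j) (Finset.mem_univ i) (hA _ _ hi), smul_zero]

/-- `S` is finite dimensional, hence Artinian, so an element of `S` that is a non-zero-divisor
(e.g. a unit of the ambient algebra) is already a unit of `S`. -/
theorem nonsing_inv_mem_subalgebra {K : Type*} [Field K] {S : Subalgebra K (Matrix n n K)}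
    {A : Matrix n n K} (hA : A ∈ S) : A⁻¹ ∈ S := by
  by_cases hdet : IsUnit A.det
  · have hS : (⟨A, hA⟩ : S) ∈ nonZeroDivisors S :=
      comap_nonZeroDivisors_le_of_injective (f := S.val) Subtype.val_injective
        ((isUnit_iff_isUnit_det A).mpr hdet).mem_nonZeroDivisors
    obtain ⟨u, hu⟩ := IsArtinianRing.isUnit_of_nonZeroDivisor_of_isIntegral' (R := K) hS
    rw [inv_eq_left_inv (B := ((u⁻¹ : Sˣ) : S))
      (by simpa [hu] using congrArg Subtype.val u.inv_mul)]
    exact Subtype.property _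
  · rw [nonsing_inv_apply_not_isUnit A hdet]
    exact S.zero_mem

end Matrix

def D6Rel (i j : Fin 5) : Prop :=
  i = 0 ∨ i = j ∨ (i ∈ ({3, 4} : Finset (Fin 5)) ∧ j ∈ ({1, 2} : Finset (Fin 5)))

instance : DecidableRel D6Rel := fun i j => by unfold D6Rel; infer_instance

instance : IsPartialOrder (Fin 5) D6Rel where
  refl := by decide
  trans := by decide
  antisymm := by decide

theorem mem_GD6_iff {A : Matrix (Fin 5) (Fin 5) ℂ} :
    A ∈ GD6 ↔
      A ∈ supportedSubalgebra ℂ D6Rel ∧ A 0 0 * A 1 1 * A 2 2 = 1 ∧ A 3 3 ^ 2 * A 4 4 = 1 := by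
  constructor
  · rintro ⟨-, hcol, h12, h13, h14, h21, h23, h24, h34, h43, h1, h2⟩
    refine ⟨fun i j hij => ?_, h1, h2⟩
    fin_cases i <;> fin_cases j <;>
      first | exact absurd (by decide) hij | assumption | exact hcol _ (by decide)
  · rintro ⟨hA, h1, h2⟩
    have hdet : A.det * A 3 3 = 1 := by
      rw [det_of_mem_supportedSubalgebra hA, Fin.prod_univ_five]
      linear_combination A 3 3 ^ 2 * A 4 4 * h1 + h2
    refine ⟨left_ne_zero_of_mul_eq_one hdet, fun i hi => hA i 0 ?_, ?_⟩
    · revert hi; fin_cases i <;> decide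
    · refine ⟨hA 1 2 (by decide), hA 1 3 (by decide), hA 1 4 (by decide), hA 2 1 (by decide),
        hA 2 3 (by decide), hA 2 4 (by decide), hA 3 4 (by decide), hA 4 3 (by decide), h1, h2⟩

theorem one_mem_GD6 : (1 : Matrix (Fin 5) (Fin 5) ℂ) ∈ GD6 :=
  mem_GD6_iff.mpr ⟨(supportedSubalgebra ℂ D6Rel).one_mem, by simp, by simp⟩

theorem mul_mem_GD6 {A B : Matrix (Fin 5) (Fin 5) ℂ} (hA : A ∈ GD6) (hB : B ∈ GD6) :
    A * B ∈ GD6 := by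
  obtain ⟨hAS, hA₁, hA₂⟩ := mem_GD6_iff.mp hA
  obtain ⟨hBS, hB₁, hB₂⟩ := mem_GD6_iff.mp hB
  have hdiag := mul_apply_self_of_mem_supportedSubalgebra hAS hBS
  refine mem_GD6_iff.mpr ⟨(supportedSubalgebra ℂ D6Rel).mul_mem hAS hBS, ?_, ?_⟩ <;>
    simp only [hdiag]
  · linear_combination B 0 0 * B 1 1 * B 2 2 * hA₁ + hB₁
  · linear_combination B 3 3 ^ 2 * B 4 4 * hA₂ + hB₂

theorem inv_mem_GD6 {A : Matrix (Fin 5) (Fin 5) ℂ} (hA : A ∈ GD6) : A⁻¹ ∈ GD6 := by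
  have hdet : IsUnit A.det := isUnit_iff_ne_zero.mpr hA.1
  obtain ⟨hAS, h₁, h₂⟩ := mem_GD6_iff.mp hA
  have hinv : A⁻¹ ∈ supportedSubalgebra ℂ D6Rel := nonsing_inv_mem_subalgebra hAS
  have hdiag (i : Fin 5) : A⁻¹ i i * A i i = 1 := by
    rw [← mul_apply_self_of_mem_supportedSubalgebra hinv hAS, nonsing_inv_mul A hdet,
      one_apply_eq]
  refine mem_GD6_iff.mpr ⟨hinv, ?_, ?_⟩
  · linear_combination -(A⁻¹ 0 0 * A⁻¹ 1 1 * A⁻¹ 2 2) * h₁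
      + A⁻¹ 1 1 * A 1 1 * A⁻¹ 2 2 * A 2 2 * hdiag 0 + A⁻¹ 2 2 * A 2 2 * hdiag 1 + hdiag 2
  · linear_combination -(A⁻¹ 3 3 ^ 2 * A⁻¹ 4 4) * h₂
      + (A⁻¹ 3 3 * A 3 3 + 1) * A⁻¹ 4 4 * A 4 4 * hdiag 3 + hdiag 4

def coordsD6 (A : Matrix (Fin 5) (Fin 5) ℂ) : Fin 11 → ℂ :=
  ![A 0 1, A 0 2, A 0 3, A 0 4, A 1 1, A 2 2, A 3 1, A 3 2, A 3 3, A 4 1, A 4 2]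

theorem coordsD6_paramD6 (v : Fin 11 → ℂ) : coordsD6 (paramD6 v) = v := by
  ext i; fin_cases i <;> rfl

theorem paramD6_mem_GD6 {v : Fin 11 → ℂ} (hv : v 4 ≠ 0 ∧ v 5 ≠ 0 ∧ v 8 ≠ 0) :
    paramD6 v ∈ GD6 := by
  obtain ⟨h4, h5, h8⟩ := hv
  refine mem_GD6_iff.mpr ⟨fun i j hij => ?_, ?_, ?_⟩
  · fin_cases i <;> fin_cases j <;> first | exact absurd (by decide) hij | rfl
  · simp [paramD6, h4, h5]
  · simp [paramD6, h8]

theorem coordsD6_ne_zero {A : Matrix (Fin 5) (Fin 5) ℂ} (hA : A ∈ GD6) :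
    coordsD6 A 4 ≠ 0 ∧ coordsD6 A 5 ≠ 0 ∧ coordsD6 A 8 ≠ 0 := by
  obtain ⟨-, h₁, h₂⟩ := mem_GD6_iff.mp hA
  exact ⟨right_ne_zero_of_mul (left_ne_zero_of_mul_eq_one h₁), right_ne_zero_of_mul_eq_one h₁,
    pow_ne_zero_iff two_ne_zero |>.mp (left_ne_zero_of_mul_eq_one h₂)⟩

theorem paramD6_coordsD6 {A : Matrix (Fin 5) (Fin 5) ℂ} (hA : A ∈ GD6) :
    paramD6 (coordsD6 A) = A := by
  obtain ⟨hAS, h₁, h₂⟩ := mem_GD6_iff.mp hA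
  have h₀₀ : (A 1 1 * A 2 2)⁻¹ = A 0 0 := inv_eq_of_mul_eq_one_left (by rw [← mul_assoc, h₁])
  have h₄₄ : (A 3 3 ^ 2)⁻¹ = A 4 4 := inv_eq_of_mul_eq_one_left (by rw [mul_comm, h₂])
  ext i j
  fin_cases i <;> fin_cases j <;>
    first | exact (hAS _ _ (by decide)).symm | rfl | exact h₀₀ | exact h₄₄

/-- `GD6` is a subgroup of `GL(5,ℂ)` (contains the identity, closed under products and
inverses), and it is an 11-dimensional variety: the parametrization by the 11 free entries
(with `a₁₁, a₂₂, a₃₃` nonzero) is injective with image `GD6`. -/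
theorem GD6_subgroup_and_dimension :
    (1 : Matrix (Fin 5) (Fin 5) ℂ) ∈ GD6 ∧
    (∀ A ∈ GD6, ∀ B ∈ GD6, A * B ∈ GD6) ∧
    (∀ A ∈ GD6, A⁻¹ ∈ GD6) ∧
    Set.InjOn paramD6 {v | v 4 ≠ 0 ∧ v 5 ≠ 0 ∧ v 8 ≠ 0} ∧
    paramD6 '' {v | v 4 ≠ 0 ∧ v 5 ≠ 0 ∧ v 8 ≠ 0} = GD6 :=
  ⟨one_mem_GD6, fun _ hA _ hB => mul_mem_GD6 hA hB, fun _ => inv_mem_GD6,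
    (Function.LeftInverse.injective coordsD6_paramD6).injOn,
    Set.Subset.antisymm (Set.image_subset_iff.mpr fun _ => paramD6_mem_GD6)
      fun A hA => ⟨coordsD6 A, coordsD6_ne_zero hA, paramD6_coordsD6 hA⟩⟩
end
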